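/- For an odd prime power q, the polynomial X³ − X² − 2X + 1 splits over F_q if and only if q ≡ 0, 1, or −1 modulo 7. -/

import Mathlib

/-! Writing a root as `s = -(z + z⁻¹)`, one has `z³ f(s) = -(1 + z + ⋯ + z⁶)`, so away from
characteristic 7 the roots of `f = X³ - X² - 2X + 1` in an algebraic closure of `F_q` are the
`-(ζ + ζ⁻¹)` with `ζ` a primitive 7th root of unity. Such a root lies in `F_q` iff it is fixed by
`x ↦ x^q`, i.e. iff `ζ^q = ζ^{±1}`, i.e. iff `q ≡ ±1 (mod 7)`. One root `s` suffices for `f` to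
split, the others being `2 - s²` and `s² - s - 1`; in characteristic 7, `-2` is a root. -/

open Polynomial

noncomputable def cubic (R : Type*) [CommRing R] : R[X] := X ^ 3 - X ^ 2 - 2 * X + 1

section
variable {R : Type*} [CommRing R]

@[simp]
lemma eval_cubic (x : R) : (cubic R).eval x = x ^ 3 - x ^ 2 - 2 * x + 1 := by
  simp [cubic]

lemma eval_cubic_map {S : Type*} [CommRing S] (f : R →+* S) (x : R) :
    (cubic S).eval (f x) = f ((cubic R).eval x) := by
  simp [map_ofNat]

lemma eval_cubic_neg_two (h7 : (7 : R) = 0) : (cubic R).eval (-2) = 0 := by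
  rw [eval_cubic]
  linear_combination -h7

lemma cubic_eq_prod_of_eval_eq_zero {s : R} (hs : (cubic R).eval s = 0) :
    cubic R = (X - C s) * (X - C (2 - s ^ 2)) * (X - C (s ^ 2 - s - 1)) := by
  have hC : C s ^ 3 - C s ^ 2 - 2 * C s + 1 = 0 := by
    simpa [C_ofNat] using congrArg C hs
  simp only [cubic, map_sub, map_pow, map_one, C_ofNat]
  linear_combination (C s * X - (C s ^ 2 - 1)) * hC

end

lemma cubic_splits_iff_exists_eval_eq_zero {K : Type*} [Field K] :
    (cubic K).Splits ↔ ∃ s, (cubic K).eval s = 0 := by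
  refine ⟨fun h ↦ h.exists_eval_eq_zero ?_, fun ⟨s, hs⟩ ↦ ?_⟩
  · have : (cubic K).degree = 3 := by rw [cubic]; compute_degree!
    rw [this]; decide
  · rw [cubic_eq_prod_of_eval_eq_zero hs]
    exact ((Splits.X_sub_C _).mul (Splits.X_sub_C _)).mul (Splits.X_sub_C _)

lemma pow_three_mul_eval_cubic_neg_add_inv {K : Type*} [Field K] {z : K} (hz : z ≠ 0) :
    z ^ 3 * (cubic K).eval (-(z + z⁻¹)) = -∑ i ∈ Finset.range 7, z ^ i := by
  simp only [eval_cubic, Finset.sum_range_succ, Finset.sum_range_zero]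
  field_simp
  ring

lemma eval_cubic_eq_zero_iff_exists_isPrimitiveRoot {K : Type*} [Field K] [IsAlgClosed K]
    (h7 : (7 : K) ≠ 0) {t : K} :
    (cubic K).eval t = 0 ↔ ∃ ζ : K, IsPrimitiveRoot ζ 7 ∧ t = -(ζ + ζ⁻¹) := by
  constructor
  · intro ht
    have hdeg : (X ^ 2 + C t * X + 1 : K[X]).degree = 2 := by compute_degree!
    obtain ⟨z, hz⟩ := IsAlgClosed.exists_root (X ^ 2 + C t * X + 1 : K[X]) (by rw [hdeg]; decide)
    simp only [IsRoot, eval_add, eval_pow, eval_mul, eval_C, eval_X, eval_one] at hz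
    have hz0 : z ≠ 0 := by rintro rfl; simp at hz
    have htz : t = -(z + z⁻¹) := by field_simp; linear_combination hz
    have hsum : ∑ i ∈ Finset.range 7, z ^ i = 0 := by
      simpa [← htz, ht] using (pow_three_mul_eval_cubic_neg_add_inv hz0).symm
    have hz1 : z ≠ 1 := by rintro rfl; exact h7 (by simpa using hsum)
    have hz7 : z ^ 7 = 1 := by
      simpa [hsum, sub_eq_zero] using (geom_sum_mul z 7).symm
    have : Fact (Nat.Prime 7) := ⟨Nat.prime_seven⟩
    exact ⟨z, orderOf_eq_prime hz7 hz1 ▸ IsPrimitiveRoot.orderOf z, htz⟩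
  · rintro ⟨ζ, hζ, rfl⟩
    have hζ0 : ζ ≠ 0 := hζ.ne_zero (by norm_num)
    have := pow_three_mul_eval_cubic_neg_add_inv hζ0
    rw [hζ.geom_sum_eq_zero (by norm_num), neg_zero] at this
    exact (mul_eq_zero.1 this).resolve_left (pow_ne_zero 3 hζ0)

lemma add_inv_eq_add_inv_iff {K : Type*} [Field K] {a b : K} (ha : a ≠ 0) (hb : b ≠ 0) :
    a + a⁻¹ = b + b⁻¹ ↔ a = b ∨ a = b⁻¹ := by
  have : a * (a + a⁻¹ - (b + b⁻¹)) = (a - b) * (a - b⁻¹) := by field_simp; ring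
  rw [← sub_eq_zero, ← mul_eq_zero_iff_left ha, this, mul_eq_zero, sub_eq_zero, sub_eq_zero]

namespace FiniteField

variable {F K : Type*} [Field F] [Fintype F] [Field K] [Algebra F K]

lemma natCast_eq_zero_iff_dvd_card (p : ℕ) [Fact p.Prime] :
    (p : F) = 0 ↔ p ∣ Fintype.card F := by
  rw [← prime_dvd_char_iff_dvd_card, ← not_iff_not, ← isUnit_iff_not_dvd_char, isUnit_iff_ne_zero]

lemma mem_range_algebraMap_iff_pow_card_eq_self {x : K} :
    x ∈ (algebraMap F K).range ↔ x ^ Fintype.card F = x := by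
  refine ⟨?_, fun hx ↦ ?_⟩
  · rintro ⟨y, rfl⟩
    rw [← map_pow, pow_card]
  · refine (Polynomial.splits_X_pow_nat_card_sub_X (K := F)).mem_range_of_isRoot
      (X_pow_card_sub_X_ne_zero F Finite.one_lt_card) ?_
    simp [hx]

lemma add_inv_mem_range_algebraMap_iff {n : ℕ} (hn : n ≠ 0) {ζ : K} (hζ : IsPrimitiveRoot ζ n) :
    ζ + ζ⁻¹ ∈ (algebraMap F K).range ↔
      Fintype.card F ≡ 1 [MOD n] ∨ n ∣ Fintype.card F + 1 := by
  have hζ0 : ζ ≠ 0 := hζ.ne_zero hn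
  have hfrob : (ζ + ζ⁻¹) ^ Fintype.card F = ζ ^ Fintype.card F + (ζ ^ Fintype.card F)⁻¹ := by
    simpa [coe_frobeniusAlgHom] using map_add (frobeniusAlgHom F K) ζ ζ⁻¹
  have hfix : ζ ^ Fintype.card F = ζ ↔ Fintype.card F ≡ 1 [MOD n] := by
    simpa [← hζ.eq_orderOf] using (hζ.isOfFinOrder hn).pow_eq_pow_iff_modEq (n := _) (m := 1)
  have hinv : ζ ^ Fintype.card F = ζ⁻¹ ↔ n ∣ Fintype.card F + 1 := by
    rw [← mul_eq_one_iff_eq_inv₀ hζ0, ← pow_succ, hζ.pow_eq_one_iff_dvd]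
  rw [mem_range_algebraMap_iff_pow_card_eq_self, hfrob,
    add_inv_eq_add_inv_iff (pow_ne_zero _ hζ0) hζ0, hfix, hinv]

end FiniteField

lemma FiniteField.exists_eval_cubic_eq_zero_iff {F : Type*} [Field F] [Fintype F]
    (h7 : (7 : F) ≠ 0) :
    (∃ s, (cubic F).eval s = 0) ↔ Fintype.card F ≡ 1 [MOD 7] ∨ 7 ∣ Fintype.card F + 1 := by
  let K := AlgebraicClosure F
  have h7K : (7 : K) ≠ 0 := by simpa [map_ofNat] using (map_ne_zero (algebraMap F K)).2 h7
  constructor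
  · rintro ⟨s, hs⟩
    obtain ⟨ζ, hζ, hsζ⟩ :=
      (eval_cubic_eq_zero_iff_exists_isPrimitiveRoot h7K (t := algebraMap F K s)).1
        (by rw [eval_cubic_map, hs, map_zero])
    refine (add_inv_mem_range_algebraMap_iff (by norm_num) hζ).1 ⟨-s, ?_⟩
    rw [map_neg, hsζ, neg_neg]
  · intro hq
    have : NeZero (7 : F) := ⟨h7⟩
    obtain ⟨ζ, hζ⟩ := HasEnoughRootsOfUnity.exists_primitiveRoot K 7
    obtain ⟨s, hs⟩ := (add_inv_mem_range_algebraMap_iff (by norm_num) hζ).2 hq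
    refine ⟨-s, (algebraMap F K).injective ?_⟩
    rw [map_zero, ← eval_cubic_map (R := F), map_neg, hs]
    exact (eval_cubic_eq_zero_iff_exists_isPrimitiveRoot h7K).2 ⟨ζ, hζ, rfl⟩

theorem cubic_splits_iff_mod_seven_general {F : Type*} [Field F] [Fintype F] :
    (X ^ 3 - X ^ 2 - 2 * X + 1 : F[X]).Splits ↔
      Fintype.card F % 7 = 0 ∨ Fintype.card F % 7 = 1 ∨ Fintype.card F % 7 = 6 := by
  have : Fact (Nat.Prime 7) := ⟨Nat.prime_seven⟩
  have h7 : (7 : F) = 0 ↔ 7 ∣ Fintype.card F := by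
    exact_mod_cast FiniteField.natCast_eq_zero_iff_dvd_card (F := F) 7
  change (cubic F).Splits ↔ _
  rw [cubic_splits_iff_exists_eval_eq_zero]
  by_cases hq : 7 ∣ Fintype.card F
  · exact iff_of_true ⟨-2, eval_cubic_neg_two (h7.2 hq)⟩ (Or.inl (Nat.mod_eq_zero_of_dvd hq))
  · rw [FiniteField.exists_eval_cubic_eq_zero_iff (mt h7.1 hq), Nat.ModEq]
    omega

/-- For a finite field `F` of odd order `q`, the polynomial `X³ - X² - 2X + 1` splits over `F`
if and only if `q ≡ 0, 1, or -1 (mod 7)`. -/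
theorem cubic_splits_iff_mod_seven {F : Type*} [Field F] [Fintype F]
    (hodd : Odd (Fintype.card F)) :
    (X ^ 3 - X ^ 2 - 2 * X + 1 : F[X]).Splits ↔
      Fintype.card F % 7 = 0 ∨ Fintype.card F % 7 = 1 ∨ Fintype.card F % 7 = 6 :=
  cubic_splits_iff_mod_seven_general
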